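/- Let R be an associative ring with unity. Every strongly two-degree Ding projective left R-module is Ding projective. -/

import Mathlib

universe u

open scoped TensorProduct DirectSum

/-- The subgroup of `E ⊗[ℤ] F` by which one quotients to obtain the balanced tensor
product `E ⊗_R F` of a right `R`-module `E` and a left `R`-module `F`. -/
def balancedSub (R : Type u) [Ring R] (E F : Type u) [AddCommGroup E] [Module Rᵐᵒᵖ E]
    [AddCommGroup F] [Module R F] : Submodule ℤ (TensorProduct ℤ E F) :=
  Submodule.span ℤ
    {x | ∃ (r : R) (e : E) (f : F),
      x = (MulOpposite.op r • e) ⊗ₜ[ℤ] f - e ⊗ₜ[ℤ] (r • f)}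

/-- The tensor product `E ⊗_R F` of a right `R`-module `E` and a left `R`-module `F`
over a possibly noncommutative ring `R`, realized as a quotient of `E ⊗[ℤ] F`. -/
def ModTensor (R : Type u) [Ring R] (E F : Type u) [AddCommGroup E] [Module Rᵐᵒᵖ E]
    [AddCommGroup F] [Module R F] : Type u :=
  TensorProduct ℤ E F ⧸ balancedSub R E F

noncomputable instance (R : Type u) [Ring R] (E F : Type u) [AddCommGroup E] [Module Rᵐᵒᵖ E]
    [AddCommGroup F] [Module R F] : AddCommGroup (ModTensor R E F) :=
  inferInstanceAs (AddCommGroup (TensorProduct ℤ E F ⧸ balancedSub R E F))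

/-- The map `E ⊗_R F → E' ⊗_R F` induced by a map `g : E → E'` of right `R`-modules. -/
noncomputable def ModTensor.mapLeft (R : Type u) [Ring R] {E E' : Type u} [AddCommGroup E]
    [Module Rᵐᵒᵖ E] [AddCommGroup E'] [Module Rᵐᵒᵖ E'] (F : Type u) [AddCommGroup F]
    [Module R F] (g : E →ₗ[Rᵐᵒᵖ] E') : ModTensor R E F →ₗ[ℤ] ModTensor R E' F :=
  Submodule.mapQ (balancedSub R E F) (balancedSub R E' F)
    (TensorProduct.map (g.restrictScalars ℤ) LinearMap.id)
    (by
      rw [balancedSub, Submodule.span_le]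
      rintro x ⟨r, e, f, rfl⟩
      refine Submodule.subset_span ⟨r, g e, f, ?_⟩
      exact (LinearMap.map_sub _ _ _).trans (by simp [TensorProduct.map_tmul, map_smul]))

/-- The map `E ⊗_R F → E ⊗_R F'` induced by a map `f : F → F'` of left `R`-modules. -/
noncomputable def ModTensor.mapRight (R : Type u) [Ring R] (E : Type u) [AddCommGroup E]
    [Module Rᵐᵒᵖ E] {F F' : Type u} [AddCommGroup F] [Module R F] [AddCommGroup F']
    [Module R F'] (f : F →ₗ[R] F') : ModTensor R E F →ₗ[ℤ] ModTensor R E F' :=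
  Submodule.mapQ (balancedSub R E F) (balancedSub R E F')
    (TensorProduct.map LinearMap.id (f.restrictScalars ℤ))
    (by
      rw [balancedSub, Submodule.span_le]
      rintro x ⟨r, e, y, rfl⟩
      refine Submodule.subset_span ⟨r, e, f y, ?_⟩
      exact (LinearMap.map_sub _ _ _).trans (by simp [TensorProduct.map_tmul, map_smul]))

/-- A left module `F` over a (possibly noncommutative) ring `R` is flat if tensoring
with `F` preserves injectivity of maps of right `R`-modules. -/
def IsFlatModule (R : Type u) [Ring R] (F : Type u) [AddCommGroup F] [Module R F] : Prop :=
  ∀ (E E' : Type u) [AddCommGroup E] [Module Rᵐᵒᵖ E] [AddCommGroup E'] [Module Rᵐᵒᵖ E']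
    (g : E →ₗ[Rᵐᵒᵖ] E'), Function.Injective g →
      Function.Injective (ModTensor.mapLeft R F g)

/-- `Ext^i_R(M, L) = 0`, expressed using the `Ext` functor on the category of left
`R`-modules (with its `ℤ`-linear structure). -/
def ExtIsZero (R : Type u) [Ring R] (i : ℕ) (M L : Type u) [AddCommGroup M] [Module R M]
    [AddCommGroup L] [Module R L] : Prop :=
  Subsingleton ((((_root_.Ext ℤ (ModuleCat.{u} R) i).obj
    (Opposite.op (ModuleCat.of R M))).obj (ModuleCat.of R L)) : Type u)

/-- `FlatDimLE R n L` means the left `R`-module `L` admits a flat resolution of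
length at most `n`. -/
def FlatDimLE (R : Type u) [Ring R] : ℕ → ModuleCat.{u} R → Prop
  | 0, L => IsFlatModule R L
  | n + 1, L =>
    ∃ (F K : ModuleCat.{u} R) (ι : (K : Type u) →ₗ[R] F) (π : (F : Type u) →ₗ[R] L),
      IsFlatModule R F ∧ Function.Injective ι ∧ Function.Surjective π ∧
      Function.Exact ι π ∧ FlatDimLE R n K

/-- A left `R`-module `L` has finite flat dimension if it admits a finite resolution
by flat modules. -/
def HasFiniteFlatDimension (R : Type u) [Ring R] (L : Type u) [AddCommGroup L]
    [Module R L] : Prop :=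
  ∃ n : ℕ, FlatDimLE R n (ModuleCat.of R L)

/-- A left `R`-module `M` is Ding projective if there is an exact sequence
`⋯ → P₁ → P₀ → P₋₁ → P₋₂ → ⋯` of projective modules with `M ≅ ker (P₀ → P₋₁)`
which stays exact under `Hom_R(-, F)` for every flat module `F`. -/
def IsDingProjective (R : Type u) [Ring R] (M : Type u) [AddCommGroup M] [Module R M] : Prop :=
  ∃ (P : ℤ → ModuleCat.{u} R) (d : ∀ n : ℤ, (P (n + 1) : Type u) →ₗ[R] P n),
    (∀ n, Module.Projective R (P n)) ∧
    (∀ n, Function.Exact (d (n + 1)) (d n)) ∧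
    (∀ (F : Type u) [AddCommGroup F] [Module R F], IsFlatModule R F →
      ∀ n : ℤ, Function.Exact
        (fun g : (P n : Type u) →ₗ[R] F => g ∘ₗ d n)
        (fun g : (P (n + 1) : Type u) →ₗ[R] F => g ∘ₗ d (n + 1))) ∧
    Nonempty (M ≃ₗ[R] LinearMap.ker (d (-1)))

/-- A left `R`-module `M` is two-degree Ding projective if there is an exact sequence
`⋯ → D₁ → D₀ → D₋₁ → D₋₂ → ⋯` of Ding projective modules with `M ≅ ker (D₀ → D₋₁)`
which stays exact under `Hom_R(-, F)` for every flat module `F`. -/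
def IsTwoDegreeDingProjective (R : Type u) [Ring R] (M : Type u) [AddCommGroup M]
    [Module R M] : Prop :=
  ∃ (D : ℤ → ModuleCat.{u} R) (d : ∀ n : ℤ, (D (n + 1) : Type u) →ₗ[R] D n),
    (∀ n, IsDingProjective R (D n)) ∧
    (∀ n, Function.Exact (d (n + 1)) (d n)) ∧
    (∀ (F : Type u) [AddCommGroup F] [Module R F], IsFlatModule R F →
      ∀ n : ℤ, Function.Exact
        (fun g : (D n : Type u) →ₗ[R] F => g ∘ₗ d n)
        (fun g : (D (n + 1) : Type u) →ₗ[R] F => g ∘ₗ d (n + 1))) ∧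
    Nonempty (M ≃ₗ[R] LinearMap.ker (d (-1)))

/-- A left `R`-module `M` is strongly two-degree Ding projective if there is an exact
sequence `⋯ →f D →f D →f D →f ⋯` with `D` Ding projective and a single map `f`, with
`M ≅ ker f`, which stays exact under `Hom_R(-, F)` for every flat module `F`. -/
def IsStronglyTwoDegreeDingProjective (R : Type u) [Ring R] (M : Type u) [AddCommGroup M]
    [Module R M] : Prop :=
  ∃ (D : ModuleCat.{u} R) (f : (D : Type u) →ₗ[R] D),
    IsDingProjective R D ∧
    Function.Exact f f ∧
    (∀ (F : Type u) [AddCommGroup F] [Module R F], IsFlatModule R F →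
      Function.Exact
        (fun g : (D : Type u) →ₗ[R] F => g ∘ₗ f)
        (fun g : (D : Type u) →ₗ[R] F => g ∘ₗ f)) ∧
    Nonempty (M ≃ₗ[R] LinearMap.ker f)

/-- A left `R`-module `M` is Gorenstein projective if there is an exact sequence
`⋯ → P₁ → P₀ → P₋₁ → P₋₂ → ⋯` of projective modules with `M ≅ ker (P₀ → P₋₁)`
which stays exact under `Hom_R(-, Q)` for every projective module `Q`. -/
def IsGorensteinProjective (R : Type u) [Ring R] (M : Type u) [AddCommGroup M]
    [Module R M] : Prop :=
  ∃ (P : ℤ → ModuleCat.{u} R) (d : ∀ n : ℤ, (P (n + 1) : Type u) →ₗ[R] P n),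
    (∀ n, Module.Projective R (P n)) ∧
    (∀ n, Function.Exact (d (n + 1)) (d n)) ∧
    (∀ (Q : Type u) [AddCommGroup Q] [Module R Q], Module.Projective R Q →
      ∀ n : ℤ, Function.Exact
        (fun g : (P n : Type u) →ₗ[R] Q => g ∘ₗ d n)
        (fun g : (P (n + 1) : Type u) →ₗ[R] Q => g ∘ₗ d (n + 1))) ∧
    Nonempty (M ≃ₗ[R] LinearMap.ker (d (-1)))

/-- A left `R`-module `H` is Gorenstein flat if there is an exact sequence
`⋯ → F₁ → F₀ → F₋₁ → F₋₂ → ⋯` of flat modules with `H ≅ ker (F₀ → F₋₁)` which stays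
exact under `E ⊗_R -` for every injective right `R`-module `E`. -/
def IsGorensteinFlat (R : Type u) [Ring R] (H : Type u) [AddCommGroup H] [Module R H] : Prop :=
  ∃ (F : ℤ → ModuleCat.{u} R) (d : ∀ n : ℤ, (F (n + 1) : Type u) →ₗ[R] F n),
    (∀ n, IsFlatModule R (F n)) ∧
    (∀ n, Function.Exact (d (n + 1)) (d n)) ∧
    (∀ (E : Type u) [AddCommGroup E] [Module Rᵐᵒᵖ E], Module.Injective Rᵐᵒᵖ E →
      ∀ n : ℤ, Function.Exact
        (ModTensor.mapRight R E (d (n + 1)))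
        (ModTensor.mapRight R E (d n))) ∧
    Nonempty (H ≃ₗ[R] LinearMap.ker (d (-1)))

/-- A left `R`-module `E` is FP-injective if `Ext¹_R(F, E) = 0` for every finitely
presented module `F`. -/
def IsFPInjective (R : Type u) [Ring R] (E : Type u) [AddCommGroup E] [Module R E] : Prop :=
  ∀ (F : Type u) [AddCommGroup F] [Module R F], Module.FinitePresentation R F →
    ExtIsZero R 1 F E

/-- A left `R`-module `M` is Ding injective if there is an exact sequence
`⋯ → E₁ → E₀ → E₋₁ → E₋₂ → ⋯` of injective modules with `M ≅ ker (E₀ → E₋₁)`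
which stays exact under `Hom_R(H, -)` for every FP-injective module `H`. -/
def IsDingInjective (R : Type u) [Ring R] (M : Type u) [AddCommGroup M] [Module R M] : Prop :=
  ∃ (E : ℤ → ModuleCat.{u} R) (d : ∀ n : ℤ, (E (n + 1) : Type u) →ₗ[R] E n),
    (∀ n, Module.Injective R (E n)) ∧
    (∀ n, Function.Exact (d (n + 1)) (d n)) ∧
    (∀ (H : Type u) [AddCommGroup H] [Module R H], IsFPInjective R H →
      ∀ n : ℤ, Function.Exact
        (fun g : H →ₗ[R] (E (n + 1 + 1) : Type u) => d (n + 1) ∘ₗ g)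
        (fun g : H →ₗ[R] (E (n + 1) : Type u) => d n ∘ₗ g)) ∧
    Nonempty (M ≃ₗ[R] LinearMap.ker (d (-1)))

/-- A left `R`-module `M` is two-degree Ding injective if there is an exact sequence
`⋯ → D₁ → D₀ → D₋₁ → D₋₂ → ⋯` of Ding injective modules with `M ≅ ker (D₀ → D₋₁)`
which stays exact under `Hom_R(H, -)` for every FP-injective module `H`. -/
def IsTwoDegreeDingInjective (R : Type u) [Ring R] (M : Type u) [AddCommGroup M]
    [Module R M] : Prop :=
  ∃ (D : ℤ → ModuleCat.{u} R) (d : ∀ n : ℤ, (D (n + 1) : Type u) →ₗ[R] D n),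
    (∀ n, IsDingInjective R (D n)) ∧
    (∀ n, Function.Exact (d (n + 1)) (d n)) ∧
    (∀ (H : Type u) [AddCommGroup H] [Module R H], IsFPInjective R H →
      ∀ n : ℤ, Function.Exact
        (fun g : H →ₗ[R] (D (n + 1 + 1) : Type u) => d (n + 1) ∘ₗ g)
        (fun g : H →ₗ[R] (D (n + 1) : Type u) => d n ∘ₗ g)) ∧
    Nonempty (M ≃ₗ[R] LinearMap.ker (d (-1)))


/-!
Put `G = im f = ker f`, so that `0 → G → D → G → 0` is exact and stays exact under `Hom(-, F)`
for flat `F`; in particular `Ext¹(G, F) = 0`. A module is Ding projective as soon as it lies in a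
class of such modules containing a projective syzygy of each member and in a class containing a
projective cosyzygy of each member: splicing presentations and copresentations gives a complete
resolution.

For the first class take the modules `N` having a projective presentation whose kernel is an
extension of `N` by a Ding projective module, for the second the dual. `G` lies in both (present
`D` and compose with `D ↠ G`, resp. embed `D` into a projective and precompose with `G ↪ D`), and
the horseshoe lemma and its dual give the closure properties. The dual horseshoe lemma needs
`Ext¹(X, Q) = 0` for `X` Ding projective and `Q` projective, that is, that projective modules
are flat.
-/

section ProjectiveFlat

open MulOpposite

variable {R : Type u} [Ring R] {Q : Type u} [AddCommGroup Q] [Module R Q]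
  (s : Q →ₗ[R] Q →₀ R) (E : Type u) [AddCommGroup E] [Module Rᵐᵒᵖ E]
  {E' : Type u} [AddCommGroup E'] [Module Rᵐᵒᵖ E']

/-- If `s` splits `Finsupp.linearCombination R id : (Q →₀ R) → Q`, this map induces an embedding
of `E ⊗_R Q` into `Q →₀ E`, natural in `E`; hence `- ⊗_R Q` preserves injections. -/
noncomputable def tensorToFinsupp : TensorProduct ℤ E Q →ₗ[ℤ] Q →₀ E :=
  TensorProduct.lift <| LinearMap.mk₂ ℤ
    (fun e y => (s y).mapRange (fun r => op r • e) (by rw [op_zero, zero_smul]))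
    (by intros; ext; simp [smul_add])
    (by intros; ext; simp only [Finsupp.mapRange_apply, Finsupp.smul_apply]; exact smul_comm _ _ _)
    (by intros; ext; simp [add_smul])
    (by intros; ext; simp only [map_zsmul, Finsupp.mapRange_apply, Finsupp.smul_apply, op_smul,
      smul_assoc])

@[simp] lemma tensorToFinsupp_tmul (e : E) (y : Q) :
    tensorToFinsupp s E (e ⊗ₜ y) =
      (s y).mapRange (fun r => op r • e) (by rw [op_zero, zero_smul]) :=
  rfl

lemma balancedSub_le_ker_tensorToFinsupp :
    balancedSub R E Q ≤ LinearMap.ker (tensorToFinsupp s E) := by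
  rw [balancedSub, Submodule.span_le]
  rintro _ ⟨r, e, y, rfl⟩
  ext j
  simp [mul_smul]

lemma tensorToFinsupp_map (g : E →ₗ[Rᵐᵒᵖ] E') (t : TensorProduct ℤ E Q) :
    tensorToFinsupp s E' (TensorProduct.map (g.restrictScalars ℤ) LinearMap.id t) =
      (tensorToFinsupp s E t).mapRange g g.map_zero := by
  induction t using TensorProduct.induction_on with
  | zero => simp
  | tmul e y => ext; simp
  | add a b ha hb => rw [map_add, map_add, ha, hb, map_add, Finsupp.mapRange_add (map_add g)]

noncomputable def finsuppToModTensor : (Q →₀ E) →ₗ[ℤ] ModTensor R E Q :=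
  Finsupp.lsum ℤ fun y => (balancedSub R E Q).mkQ ∘ₗ (TensorProduct.mk ℤ E Q).flip y

lemma finsuppToModTensor_tensorToFinsupp (hs : Finsupp.linearCombination R id ∘ₗ s = .id)
    (t : TensorProduct ℤ E Q) :
    finsuppToModTensor (R := R) E (tensorToFinsupp s E t) = Submodule.Quotient.mk t := by
  induction t using TensorProduct.induction_on with
  | zero => rw [map_zero, map_zero]; rfl
  | tmul e y =>
    have hy : (s y).sum (fun j r => r • j) = y := by
      simpa [Finsupp.linearCombination_apply] using LinearMap.congr_fun hs y
    conv_rhs => rw [← hy, Finsupp.sum, TensorProduct.tmul_sum, ← Submodule.mkQ_apply, map_sum]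
    rw [tensorToFinsupp_tmul, finsuppToModTensor, Finsupp.lsum_apply,
      Finsupp.sum_mapRange_index (by simp)]
    refine Finset.sum_congr rfl fun j _ => (Submodule.Quotient.eq _).mpr ?_
    exact Submodule.subset_span ⟨_, e, j, rfl⟩
  | add a b ha hb => simp only [map_add, ha, hb]; rfl

theorem Module.Projective.isFlatModule [Module.Projective R Q] : IsFlatModule R Q := by
  obtain ⟨s, hs⟩ := Module.projective_def'.mp ‹Module.Projective R Q›
  intro E E' _ _ _ _ g hg
  refine (injective_iff_map_eq_zero _).mpr fun x hx => ?_
  obtain ⟨t, rfl⟩ := Submodule.Quotient.mk_surjective _ x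
  have hmap : TensorProduct.map (g.restrictScalars ℤ) LinearMap.id t ∈ balancedSub R E' Q :=
    (Submodule.Quotient.mk_eq_zero _).mp hx
  have ht : tensorToFinsupp s E t = 0 := by
    refine Finsupp.mapRange_injective g g.map_zero hg ?_
    rw [← tensorToFinsupp_map, balancedSub_le_ker_tensorToFinsupp s E' hmap,
      Finsupp.mapRange_zero]
  rw [← finsuppToModTensor_tensorToFinsupp s E hs t, ht, map_zero]

end ProjectiveFlat

section ShortExact

variable {R : Type u} [Ring R] {A B C D F G K Q T : Type u} [AddCommGroup A] [Module R A]
  [AddCommGroup B] [Module R B] [AddCommGroup C] [Module R C] [AddCommGroup D] [Module R D]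
  [AddCommGroup F] [Module R F] [AddCommGroup G] [Module R G] [AddCommGroup K] [Module R K]
  [AddCommGroup Q] [Module R Q] [AddCommGroup T] [Module R T]

structure IsShortExact (i : A →ₗ[R] B) (p : B →ₗ[R] C) : Prop where
  injective : Function.Injective i
  exact : Function.Exact i p
  surjective : Function.Surjective p

lemma IsShortExact.subtype_ker {p : B →ₗ[R] C} (hp : Function.Surjective p) :
    IsShortExact (LinearMap.ker p).subtype p :=
  ⟨Submodule.injective_subtype _, LinearMap.exact_subtype_ker_map p, hp⟩

lemma IsShortExact.mkQ_range {i : A →ₗ[R] B} (hi : Function.Injective i) :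
    IsShortExact i (LinearMap.range i).mkQ :=
  ⟨hi, LinearMap.exact_map_mkQ_range i, Submodule.mkQ_surjective _⟩

lemma Function.Exact.exists_comp_eq {i : A →ₗ[R] B} {p : B →ₗ[R] C} (hip : Function.Exact i p)
    (hp : Function.Surjective p) (φ : B →ₗ[R] F) (hφ : φ ∘ₗ i = 0) :
    ∃ ψ : C →ₗ[R] F, ψ ∘ₗ p = φ :=
  ⟨(LinearMap.range i).liftQ φ (LinearMap.range_le_ker_iff.mpr hφ) ∘ₗ
    (hip.linearEquivOfSurjective hp).symm.toLinearMap, by ext; simp⟩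

theorem surjective_comp_range_subtype {x : B →ₗ[R] C} {y : A →ₗ[R] B} (hxy : x ∘ₗ y = 0)
    (hHom : Function.Exact (fun g : C →ₗ[R] F => g ∘ₗ x) (fun g : B →ₗ[R] F => g ∘ₗ y)) :
    Function.Surjective fun ψ : C →ₗ[R] F => ψ ∘ₗ (LinearMap.range x).subtype := by
  intro φ
  obtain ⟨h, hh⟩ := (hHom (φ ∘ₗ x.rangeRestrict)).mp (by
    ext a
    have : x.rangeRestrict (y a) = 0 := Subtype.ext (LinearMap.congr_fun hxy a)
    simp [this])
  refine ⟨h, ?_⟩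
  ext ⟨_, b, rfl⟩
  exact LinearMap.congr_fun hh b

theorem IsShortExact.exists_ker_comp {i : K →ₗ[R] B} {q : B →ₗ[R] D} (hiq : IsShortExact i q)
    {a : A →ₗ[R] D} {b : D →ₗ[R] C} (ha : Function.Injective a) (hab : Function.Exact a b) :
    ∃ (j : K →ₗ[R] LinearMap.ker (b ∘ₗ q)) (r : LinearMap.ker (b ∘ₗ q) →ₗ[R] A),
      (LinearMap.ker (b ∘ₗ q)).subtype ∘ₗ j = i ∧ IsShortExact j r := by
  have hi : ∀ x, i x ∈ LinearMap.ker (b ∘ₗ q) := fun x => by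
    simp [hiq.exact.apply_apply_eq_zero]
  have hq : ∀ z ∈ LinearMap.ker (b ∘ₗ q), q z ∈ LinearMap.range a := fun z hz => by
    rw [← hab.linearMap_ker_eq]; exact hz
  let e := LinearEquiv.ofInjective a ha
  refine ⟨LinearMap.codRestrict _ i hi, e.symm.toLinearMap ∘ₗ q.restrict hq, rfl,
    fun x y hxy => hiq.injective (congrArg Subtype.val hxy), fun z => ?_, fun x => ?_⟩
  · simp only [LinearMap.comp_apply, LinearEquiv.coe_coe, LinearEquiv.map_eq_zero_iff,
      Set.mem_range]
    rw [Subtype.ext_iff, LinearMap.coe_restrict_apply, ZeroMemClass.coe_zero, hiq.exact]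
    exact ⟨fun ⟨x, hx⟩ => ⟨x, Subtype.ext hx⟩, fun ⟨x, hx⟩ => ⟨x, congrArg Subtype.val hx⟩⟩
  · obtain ⟨z, hz⟩ := hiq.surjective (a x)
    have hz' : z ∈ LinearMap.ker (b ∘ₗ q) := by
      simp [hz, hab.apply_apply_eq_zero]
    refine ⟨⟨z, hz'⟩, e.symm_apply_eq.mpr (Subtype.ext ?_)⟩
    simp [e, hz]

theorem Function.Exact.exists_coker_comp {a : A →ₗ[R] D} {b : D →ₗ[R] C}
    (hab : Function.Exact a b) (hb : Function.Surjective b) {j : D →ₗ[R] Q}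
    (hj : Function.Injective j) :
    ∃ (k : C →ₗ[R] Q ⧸ LinearMap.range (j ∘ₗ a))
      (r : (Q ⧸ LinearMap.range (j ∘ₗ a)) →ₗ[R] Q ⧸ LinearMap.range j), IsShortExact k r := by
  have hle : LinearMap.range a ≤ (LinearMap.range (j ∘ₗ a)).comap j := by
    rintro _ ⟨x, rfl⟩
    exact ⟨x, rfl⟩
  let k := (LinearMap.range a).mapQ _ j hle ∘ₗ (hab.linearEquivOfSurjective hb).symm.toLinearMap
  have hk : ∀ d, k (b d) = Submodule.Quotient.mk (j d) := fun d => by simp [k]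
  refine ⟨k, Submodule.factor (LinearMap.range_comp_le_range a j), ⟨fun c c' h => ?_, fun z => ?_,
    fun z => ?_⟩⟩
  · obtain ⟨d, rfl⟩ := hb c
    obtain ⟨d', rfl⟩ := hb c'
    rw [hk, hk, Submodule.Quotient.eq, ← map_sub] at h
    obtain ⟨x, hx⟩ := h
    rw [← sub_eq_zero, ← map_sub, ← hj (hx.trans rfl), hab.apply_apply_eq_zero]
  · obtain ⟨y, rfl⟩ := Submodule.mkQ_surjective _ z
    refine ⟨fun h => ?_, ?_⟩
    · obtain ⟨d, rfl⟩ := (Submodule.Quotient.mk_eq_zero _).mp h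
      exact ⟨b d, hk d⟩
    · rintro ⟨c, hc⟩
      obtain ⟨d, rfl⟩ := hb c
      rw [← hc, hk, ← Submodule.mkQ_apply, Submodule.factor_mk, Submodule.mkQ_apply,
        Submodule.Quotient.mk_eq_zero]
      exact ⟨d, rfl⟩
  · obtain ⟨y, rfl⟩ := Submodule.mkQ_surjective _ z
    exact ⟨Submodule.Quotient.mk y, rfl⟩

def fibreProduct (q : B →ₗ[R] G) (p : T →ₗ[R] G) : Submodule R (B × T) :=
  LinearMap.ker (q ∘ₗ LinearMap.fst R B T - p ∘ₗ LinearMap.snd R B T)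

lemma mem_fibreProduct {q : B →ₗ[R] G} {p : T →ₗ[R] G} {z : B × T} :
    z ∈ fibreProduct q p ↔ q z.1 = p z.2 := by
  simp [fibreProduct, sub_eq_zero]

lemma IsShortExact.exists_inl_fibreProduct {a : A →ₗ[R] B} {q : B →ₗ[R] G}
    (haq : IsShortExact a q) (p : T →ₗ[R] G) :
    ∃ a' : A →ₗ[R] fibreProduct q p,
      (fibreProduct q p).subtype ∘ₗ a' = LinearMap.inl R B T ∘ₗ a ∧
      IsShortExact a' (LinearMap.snd R B T ∘ₗ (fibreProduct q p).subtype) := by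
  refine ⟨LinearMap.codRestrict _ (LinearMap.inl R B T ∘ₗ a)
    fun x => mem_fibreProduct.mpr (by simp [haq.exact.apply_apply_eq_zero]), rfl,
    fun x y h => haq.injective (congrArg (·.1.1) h), fun ⟨⟨b, t⟩, hz⟩ => ?_, fun t => ?_⟩
  · simp only [LinearMap.comp_apply, Submodule.subtype_apply, LinearMap.snd_apply,
      Set.mem_range, Subtype.ext_iff, LinearMap.codRestrict_apply, LinearMap.inl_apply,
      Prod.ext_iff]
    refine ⟨fun ht => ?_, fun ⟨x, hx, ht⟩ => ht.symm⟩
    subst ht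
    obtain ⟨x, hx⟩ := (haq.exact b).mp (by simpa using mem_fibreProduct.mp hz)
    exact ⟨x, hx, rfl⟩
  · obtain ⟨b, hb⟩ := haq.surjective (p t)
    exact ⟨⟨(b, t), mem_fibreProduct.mpr hb⟩, rfl⟩

lemma IsShortExact.exists_inr_fibreProduct {i : K →ₗ[R] T} {p : T →ₗ[R] G}
    (hip : IsShortExact i p) (q : B →ₗ[R] G) :
    ∃ i' : K →ₗ[R] fibreProduct q p,
      (fibreProduct q p).subtype ∘ₗ i' = LinearMap.inr R B T ∘ₗ i ∧
      IsShortExact i' (LinearMap.fst R B T ∘ₗ (fibreProduct q p).subtype) := by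
  refine ⟨LinearMap.codRestrict _ (LinearMap.inr R B T ∘ₗ i)
    fun k => mem_fibreProduct.mpr (by simp [hip.exact.apply_apply_eq_zero]), rfl,
    fun x y h => hip.injective (congrArg (·.1.2) h), fun ⟨⟨b, t⟩, hz⟩ => ?_, fun b => ?_⟩
  · simp only [LinearMap.comp_apply, Submodule.subtype_apply, LinearMap.fst_apply,
      Set.mem_range, Subtype.ext_iff, LinearMap.codRestrict_apply, LinearMap.inr_apply,
      Prod.ext_iff]
    refine ⟨fun hb => ?_, fun ⟨k, hb, hk⟩ => hb.symm⟩
    subst hb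
    obtain ⟨k, hk⟩ := (hip.exact t).mp (by simpa using (mem_fibreProduct.mp hz).symm)
    exact ⟨k, rfl, hk⟩
  · obtain ⟨t, ht⟩ := hip.surjective (q b)
    exact ⟨⟨(b, t), mem_fibreProduct.mpr ht.symm⟩, rfl⟩

end ShortExact


section Horseshoe

variable {R : Type u} [Ring R] {A G C : Type u} [AddCommGroup A] [Module R A]
  [AddCommGroup G] [Module R G] [AddCommGroup C] [Module R C] {a : A →ₗ[R] G} {b : G →ₗ[R] C}

theorem IsShortExact.exists_horseshoe (hab : IsShortExact a b) {QA QC : Type u}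
    [AddCommGroup QA] [Module R QA] [AddCommGroup QC] [Module R QC] [Module.Projective R QC]
    {pA : QA →ₗ[R] A} (hpA : Function.Surjective pA) {pC : QC →ₗ[R] C}
    (hpC : Function.Surjective pC) :
    ∃ p : QA × QC →ₗ[R] G, Function.Surjective p ∧
      ∃ (j : LinearMap.ker pA →ₗ[R] LinearMap.ker p) (r : LinearMap.ker p →ₗ[R] LinearMap.ker pC),
        IsShortExact j r := by
  obtain ⟨l, hl⟩ := Module.projective_lifting_property b pC hab.surjective
  have hl' : ∀ y, b (l y) = pC y := LinearMap.congr_fun hl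
  have hker : ∀ g, b g = 0 → ∃ x, a (pA x) = g := fun g hg => by
    obtain ⟨w, rfl⟩ := (hab.exact g).mp hg
    obtain ⟨x, rfl⟩ := hpA w
    exact ⟨x, rfl⟩
  let p := (a ∘ₗ pA).coprod l
  have hp : ∀ x y, p (x, y) = a (pA x) + l y := fun _ _ => rfl
  have hj : ∀ x : LinearMap.ker pA, ((x : QA), (0 : QC)) ∈ LinearMap.ker p := fun x => by
    simp [hp]
  have hr : ∀ z : LinearMap.ker p, (z : QA × QC).2 ∈ LinearMap.ker pC := fun ⟨⟨x, y⟩, hz⟩ => by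
    have : l y = -a (pA x) := eq_neg_of_add_eq_zero_right hz
    simp [← hl', this, hab.exact.apply_apply_eq_zero]
  refine ⟨p, fun g => ?_, LinearMap.codRestrict _ (LinearMap.inl R QA QC ∘ₗ Submodule.subtype _) hj,
    LinearMap.codRestrict _ (LinearMap.snd R QA QC ∘ₗ Submodule.subtype _) hr,
    fun x y h => Subtype.ext (congrArg (·.1.1) h), fun z => ?_, fun y => ?_⟩
  · obtain ⟨y, hy⟩ := hpC (b g)
    obtain ⟨x, hx⟩ := hker (g - l y) (by rw [map_sub, hl', hy, sub_self])
    exact ⟨(x, y), by rw [hp, hx, sub_add_cancel]⟩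
  · obtain ⟨⟨x, y⟩, hz⟩ := z
    simp only [Set.mem_range, Subtype.ext_iff, Prod.ext_iff, ZeroMemClass.coe_zero]
    refine ⟨fun hy => ?_, fun ⟨x', hx, hy⟩ => hy.symm⟩
    subst hy
    refine ⟨⟨x, ?_⟩, rfl, rfl⟩
    exact hab.injective (by simpa [hp] using hz)
  · obtain ⟨x, hx⟩ := hker (l y) (by rw [hl', y.2])
    refine ⟨⟨(-x, y), ?_⟩, rfl⟩
    simp [hp, hx]

theorem IsShortExact.exists_dual_horseshoe (hab : IsShortExact a b) {QA QC : Type u}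
    [AddCommGroup QA] [Module R QA] [AddCommGroup QC] [Module R QC]
    {jA : A →ₗ[R] QA} (hjA : Function.Injective jA) {jC : C →ₗ[R] QC}
    (hjC : Function.Injective jC) (u : G →ₗ[R] QA) (hu : u ∘ₗ a = jA) :
    ∃ j : G →ₗ[R] QA × QC, Function.Injective j ∧
      ∃ (k : (QA ⧸ LinearMap.range jA) →ₗ[R] (QA × QC) ⧸ LinearMap.range j)
        (r : ((QA × QC) ⧸ LinearMap.range j) →ₗ[R] QC ⧸ LinearMap.range jC),
        IsShortExact k r := by
  have hu' : ∀ x, u (a x) = jA x := LinearMap.congr_fun hu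
  let j := u.prod (jC ∘ₗ b)
  have hj : ∀ g, j g = (u g, jC (b g)) := fun _ => rfl
  have hlA : LinearMap.range jA ≤ (LinearMap.range j).comap (LinearMap.inl R QA QC) := by
    rintro _ ⟨x, rfl⟩
    exact ⟨a x, by simp [hj, hu', hab.exact.apply_apply_eq_zero]⟩
  have hlC : LinearMap.range j ≤ (LinearMap.range jC).comap (LinearMap.snd R QA QC) := by
    rintro _ ⟨g, rfl⟩
    exact ⟨b g, rfl⟩
  refine ⟨j, fun g g' h => ?_, (LinearMap.range jA).mapQ _ _ hlA,
    (LinearMap.range j).mapQ _ _ hlC, ⟨fun y y' h => ?_, fun z => ?_, fun z => ?_⟩⟩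
  · simp only [hj, Prod.mk.injEq] at h
    obtain ⟨x, hx⟩ := (hab.exact (g - g')).mp (by rw [map_sub, hjC h.2, sub_self])
    have hx0 : x = 0 := hjA (by rw [← hu', hx, map_sub, h.1, sub_self, map_zero])
    rw [← sub_eq_zero, ← hx, hx0, map_zero]
  · obtain ⟨y, rfl⟩ := Submodule.mkQ_surjective _ y
    obtain ⟨y', rfl⟩ := Submodule.mkQ_surjective _ y'
    simp only [Submodule.mkQ_apply, Submodule.mapQ_apply, Submodule.Quotient.eq] at h ⊢
    obtain ⟨g, hg⟩ := h
    simp only [hj, LinearMap.inl_apply, Prod.mk_sub_mk, sub_zero, Prod.mk.injEq] at hg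
    obtain ⟨x, rfl⟩ := (hab.exact g).mp (hjC (by rw [hg.2, map_zero]))
    exact ⟨x, by rw [← hu', hg.1]⟩
  · refine ⟨fun h => ?_, ?_⟩
    · obtain ⟨⟨y, w⟩, rfl⟩ := Submodule.mkQ_surjective _ z
      obtain ⟨c, hc⟩ := (Submodule.Quotient.mk_eq_zero _).mp h
      obtain ⟨g, rfl⟩ := hab.surjective c
      refine ⟨Submodule.Quotient.mk (y - u g), (Submodule.Quotient.eq _).mpr ⟨-g, ?_⟩⟩
      simp [hj, hc]
    · rintro ⟨y, rfl⟩
      obtain ⟨y, rfl⟩ := Submodule.mkQ_surjective _ y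
      simp
  · obtain ⟨z, rfl⟩ := Submodule.mkQ_surjective _ z
    exact ⟨Submodule.Quotient.mk (0, z), rfl⟩

end Horseshoe

/-- `Ext¹_R(G, F) = 0` for every flat module `F`, stated without `Ext`: along every short exact
sequence `0 → A → B → G → 0`, every map from `A` to a flat module extends to `B`. -/
def IsFlatOrthogonal (R : Type u) [Ring R] (G : Type u) [AddCommGroup G] [Module R G] : Prop :=
  ∀ (F : Type u) [AddCommGroup F] [Module R F], IsFlatModule R F →
  ∀ (A B : Type u) [AddCommGroup A] [Module R A] [AddCommGroup B] [Module R B]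
    (i : A →ₗ[R] B) (p : B →ₗ[R] G), IsShortExact i p →
    Function.Surjective fun ψ : B →ₗ[R] F => ψ ∘ₗ i

namespace IsFlatOrthogonal

variable {R : Type u} [Ring R] {A G C K T : Type u} [AddCommGroup A] [Module R A]
  [AddCommGroup G] [Module R G] [AddCommGroup C] [Module R C] [AddCommGroup K] [Module R K]
  [AddCommGroup T] [Module R T]

theorem of_projective [Module.Projective R G] : IsFlatOrthogonal R G := by
  intro F _ _ _ A B _ _ _ _ i p hip φ
  obtain ⟨l, hl⟩ := Module.projective_lifting_property p LinearMap.id hip.surjective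
  obtain ⟨e, hei, -⟩ := hip.exact.splitSurjectiveEquiv hip.injective ⟨l, hl⟩
  refine ⟨φ ∘ₗ LinearMap.fst R A G ∘ₗ e.toLinearMap, ?_⟩
  rw [hei]
  ext
  simp

theorem of_linearEquiv (e : G ≃ₗ[R] C) (hG : IsFlatOrthogonal R G) : IsFlatOrthogonal R C :=
  fun F _ _ hF _ _ _ _ _ _ i p hip =>
    hG F hF _ _ i (e.symm.toLinearMap ∘ₗ p) ⟨hip.injective,
      LinearEquiv.postcomp_exact_iff_exact.mpr hip.exact, e.symm.surjective.comp hip.surjective⟩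

theorem of_shortExact {a : A →ₗ[R] G} {b : G →ₗ[R] C} (hab : IsShortExact a b)
    (hA : IsFlatOrthogonal R A) (hC : IsFlatOrthogonal R C) : IsFlatOrthogonal R G := by
  intro F _ _ hF K B _ _ _ _ i q hiq φ
  obtain ⟨j, r, hj, hjr⟩ := hiq.exists_ker_comp hab.injective hab.exact
  obtain ⟨φ₁, hφ₁ : φ₁ ∘ₗ j = φ⟩ := hA F hF _ _ j r hjr φ
  obtain ⟨ψ, hψ : ψ ∘ₗ _ = φ₁⟩ :=
    hC F hF _ _ _ (b ∘ₗ q) (.subtype_ker (hab.surjective.comp hiq.surjective)) φ₁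
  refine ⟨ψ, show ψ ∘ₗ i = φ from ?_⟩
  rw [← hj, ← LinearMap.comp_assoc, hψ, hφ₁]

/-- The elementary half of the long exact `Ext(-, F)` sequence of `0 → K → T → G → 0`. -/
theorem of_shortExact_of_extend {i : K →ₗ[R] T} {p : T →ₗ[R] G} (hip : IsShortExact i p)
    (hT : IsFlatOrthogonal R T)
    (hext : ∀ (F : Type u) [AddCommGroup F] [Module R F], IsFlatModule R F →
      Function.Surjective fun ψ : T →ₗ[R] F => ψ ∘ₗ i) :
    IsFlatOrthogonal R G := by
  intro F _ _ hF A B _ _ _ _ a q haq φ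
  obtain ⟨a', ha', haX⟩ := haq.exists_inl_fibreProduct p
  obtain ⟨i', hi', hiX⟩ := hip.exists_inr_fibreProduct q
  have ha'' : ∀ x, (a' x : B × T) = (a x, 0) := LinearMap.congr_fun ha'
  have hi'' : ∀ k, (i' k : B × T) = (0, i k) := LinearMap.congr_fun hi'
  obtain ⟨Φ, hΦ : Φ ∘ₗ a' = φ⟩ := hT F hF _ _ _ _ haX φ
  obtain ⟨χ, hχ : χ ∘ₗ i = Φ ∘ₗ i'⟩ := hext F hF (Φ ∘ₗ i')
  obtain ⟨ψ, hψ⟩ := hiX.exact.exists_comp_eq hiX.surjective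
    (Φ - χ ∘ₗ LinearMap.snd R B T ∘ₗ (fibreProduct q p).subtype) (by
      ext k
      have hk : χ (i k) = Φ (i' k) := LinearMap.congr_fun hχ k
      simp [hi'', hk])
  refine ⟨ψ, LinearMap.ext fun x => ?_⟩
  simpa [ha'', ← LinearMap.congr_fun hΦ x] using LinearMap.congr_fun hψ (a' x)

end IsFlatOrthogonal

section Splicing

variable {R : Type u} [Ring R]

theorem isDingProjective_of_splice (Y T : ℤ → ModuleCat.{u} R)
    (ι : ∀ n, (Y (n + 1) : Type u) →ₗ[R] T n) (π : ∀ n, (T n : Type u) →ₗ[R] Y n)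
    (hses : ∀ n, IsShortExact (ι n) (π n)) (hT : ∀ n, Module.Projective R (T n))
    (hY : ∀ n, IsFlatOrthogonal R (Y n)) : IsDingProjective R (Y 1) := by
  refine ⟨T, fun n => ι n ∘ₗ π (n + 1), hT, fun n => ?_, fun F _ _ hF n g => ?_, ⟨?_⟩⟩
  · rw [(hses n).injective.comp_exact_iff_exact, (hses (n + 1 + 1)).surjective.comp_exact_iff_exact]
    exact (hses (n + 1)).exact
  · refine ⟨fun hg => ?_, ?_⟩
    · have hgι : g ∘ₗ ι (n + 1) = 0 := by
        ext y
        obtain ⟨x, rfl⟩ := (hses (n + 1 + 1)).surjective y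
        exact LinearMap.congr_fun hg x
      obtain ⟨ψ, rfl⟩ := (hses (n + 1)).exact.exists_comp_eq (hses (n + 1)).surjective g hgι
      obtain ⟨h, rfl⟩ := hY n F hF _ _ _ _ (hses n) ψ
      exact ⟨h, rfl⟩
    · rintro ⟨h, rfl⟩
      simp only [LinearMap.comp_assoc]
      rw [← LinearMap.comp_assoc _ (ι (n + 1)), (hses (n + 1)).exact.linearMap_comp_eq_zero]
      simp
  · refine (LinearEquiv.ofInjective _ (hses (-1 + 1)).injective).trans (LinearEquiv.ofEq _ _ ?_)
    rw [LinearMap.ker_comp_of_ker_eq_bot _ (LinearMap.ker_eq_bot.mpr (hses (-1)).injective),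
      (hses (-1 + 1)).exact.linearMap_ker_eq]

def IsSyzygyClosed (S : ModuleCat.{u} R → Prop) : Prop :=
  ∀ G, S G → IsFlatOrthogonal R G ∧ ∃ (Q : ModuleCat.{u} R) (p : (Q : Type u) →ₗ[R] G),
    Module.Projective R Q ∧ Function.Surjective p ∧ S (ModuleCat.of R (LinearMap.ker p))

def IsCosyzygyClosed (S : ModuleCat.{u} R → Prop) : Prop :=
  ∀ G, S G → IsFlatOrthogonal R G ∧ ∃ (Q : ModuleCat.{u} R) (j : (G : Type u) →ₗ[R] Q),
    Module.Projective R Q ∧ Function.Injective j ∧ S (ModuleCat.of R (Q ⧸ LinearMap.range j))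

theorem isDingProjective_of_isSyzygyClosed_of_isCosyzygyClosed {L S : ModuleCat.{u} R → Prop}
    (hL : IsSyzygyClosed L) (hS : IsCosyzygyClosed S) (G : ModuleCat.{u} R) (hGL : L G)
    (hGS : S G) : IsDingProjective R G := by
  choose hLo Ql pl hQl hpl hLk using hL
  choose hSo Qs js hQs hjs hSk using hS
  let left : ℕ → {G // L G} := fun k =>
    Nat.rec ⟨G, hGL⟩ (fun _ X => ⟨ModuleCat.of R (LinearMap.ker (pl X.1 X.2)), hLk X.1 X.2⟩) k
  let right : ℕ → {G // S G} := fun k =>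
    Nat.rec ⟨G, hGS⟩ (fun _ X => ⟨ModuleCat.of R (Qs X.1 X.2 ⧸ LinearMap.range (js X.1 X.2)),
      hSk X.1 X.2⟩) k
  -- `Y 1 = G`; `Y (k + 2)` is a syzygy of `Y (k + 1)`, and `Y (-k)` a cosyzygy of `Y (1 - k)`.
  let Y : ℤ → ModuleCat.{u} R
    | .ofNat 0 => (right 1).1
    | .ofNat (k + 1) => (left k).1
    | .negSucc k => (right (k + 2)).1
  let T : ℤ → ModuleCat.{u} R
    | .ofNat 0 => Qs (right 0).1 (right 0).2
    | .ofNat (k + 1) => Ql (left k).1 (left k).2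
    | .negSucc k => Qs (right (k + 1)).1 (right (k + 1)).2
  let π : ∀ n, (T n : Type u) →ₗ[R] Y n
    | .ofNat 0 => (LinearMap.range (js (right 0).1 (right 0).2)).mkQ
    | .ofNat (k + 1) => pl (left k).1 (left k).2
    | .negSucc k => (LinearMap.range (js (right (k + 1)).1 (right (k + 1)).2)).mkQ
  let ι : ∀ n, (Y (n + 1) : Type u) →ₗ[R] T n
    | .ofNat 0 => js (right 0).1 (right 0).2
    | .ofNat (k + 1) => (LinearMap.ker (pl (left k).1 (left k).2)).subtype
    | .negSucc 0 => js (right 1).1 (right 1).2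
    | .negSucc (k + 1) => js (right (k + 2)).1 (right (k + 2)).2
  refine isDingProjective_of_splice Y T ι π (fun n => ?_) (fun n => ?_) (fun n => ?_)
  · match n with
    | .ofNat 0 => exact .mkQ_range (hjs _ _)
    | .ofNat (k + 1) => exact .subtype_ker (hpl _ _)
    | .negSucc 0 => exact .mkQ_range (hjs _ _)
    | .negSucc (k + 1) => exact .mkQ_range (hjs _ _)
  · match n with
    | .ofNat 0 => exact hQs _ _
    | .ofNat (k + 1) => exact hQl _ _
    | .negSucc k => exact hQs _ _
  · match n with
    | .ofNat 0 => exact hSo _ (right 1).2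
    | .ofNat (k + 1) => exact hLo _ (left k).2
    | .negSucc k => exact hSo _ (right (k + 2)).2

end Splicing

section Boundaries

variable {R : Type u} [Ring R] {P : ℤ → ModuleCat.{u} R}
  {d : ∀ n : ℤ, (P (n + 1) : Type u) →ₗ[R] P n}

/- Boundaries rather than cycles: the cokernel of `im d (m + 1) ↪ P (m + 1)` is `im d m` on the
nose, without reindexing `P`. -/
def boundaryClass (d : ∀ n : ℤ, (P (n + 1) : Type u) →ₗ[R] P n) (G : ModuleCat.{u} R) : Prop :=
  ∃ n, Nonempty ((G : Type u) ≃ₗ[R] LinearMap.range (d n))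

variable (hP : ∀ n, Module.Projective R (P n)) (hd : ∀ n, Function.Exact (d (n + 1)) (d n))
  (hHom : ∀ (F : Type u) [AddCommGroup F] [Module R F], IsFlatModule R F →
    ∀ n : ℤ, Function.Exact
      (fun g : (P n : Type u) →ₗ[R] F => g ∘ₗ d n)
      (fun g : (P (n + 1) : Type u) →ₗ[R] F => g ∘ₗ d (n + 1)))
include hP hd hHom

theorem isFlatOrthogonal_range (n : ℤ) : IsFlatOrthogonal R (LinearMap.range (d n)) := by
  have := hP (n + 1)
  refine IsFlatOrthogonal.of_shortExact_of_extend (i := (LinearMap.range (d (n + 1))).subtype)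
    ⟨Submodule.injective_subtype _, LinearMap.exact_iff.mpr ?_, (d n).surjective_rangeRestrict⟩
    .of_projective fun F _ _ hF =>
      surjective_comp_range_subtype (hd (n + 1)).linearMap_comp_eq_zero (hHom F hF (n + 1))
  rw [LinearMap.ker_rangeRestrict, Submodule.range_subtype, (hd n).linearMap_ker_eq]

theorem isSyzygyClosed_boundaryClass : IsSyzygyClosed (boundaryClass d) := by
  rintro G ⟨n, ⟨e⟩⟩
  refine ⟨(isFlatOrthogonal_range hP hd hHom n).of_linearEquiv e.symm, P (n + 1),
    e.symm.toLinearMap ∘ₗ (d n).rangeRestrict, hP (n + 1),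
    e.symm.surjective.comp (d n).surjective_rangeRestrict, n + 1, ⟨LinearEquiv.ofEq _ _ ?_⟩⟩
  rw [LinearEquiv.ker_comp, LinearMap.ker_rangeRestrict, (hd n).linearMap_ker_eq]

theorem isCosyzygyClosed_boundaryClass : IsCosyzygyClosed (boundaryClass d) := by
  rintro G ⟨n, ⟨e⟩⟩
  obtain ⟨m, rfl⟩ : ∃ m, n = m + 1 := ⟨n - 1, by omega⟩
  let j := (LinearMap.range (d (m + 1))).subtype ∘ₗ e.toLinearMap
  have hj : LinearMap.range j = LinearMap.ker (d m) := by
    rw [LinearMap.range_comp, LinearEquiv.range, Submodule.map_top, Submodule.range_subtype,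
      (hd m).linearMap_ker_eq]
  refine ⟨(isFlatOrthogonal_range hP hd hHom _).of_linearEquiv e.symm, P (m + 1), j, hP (m + 1),
    (Submodule.injective_subtype _).comp e.injective, m,
    ⟨(Submodule.quotEquivOfEq _ _ hj).trans (d m).quotKerEquivRange⟩⟩

end Boundaries

section DingClass

variable {R : Type u} [Ring R]

theorem IsDingProjective.of_linearEquiv {M N : Type u} [AddCommGroup M] [Module R M]
    [AddCommGroup N] [Module R N] (e : M ≃ₗ[R] N) (hN : IsDingProjective R N) :
    IsDingProjective R M :=
  let ⟨P, d, hP, hd, hHom, ⟨e'⟩⟩ := hN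
  ⟨P, d, hP, hd, hHom, ⟨e.trans e'⟩⟩

theorem isSyzygyClosed_isDingProjective :
    IsSyzygyClosed fun G : ModuleCat.{u} R => IsDingProjective R G := by
  rintro G ⟨P, d, hP, hd, hHom, ⟨e⟩⟩
  have hG : boundaryClass d G := ⟨-1 + 1, ⟨e.trans (.ofEq _ _ (hd (-1)).linearMap_ker_eq)⟩⟩
  obtain ⟨hGo, Q, p, hQ, hp, hK⟩ := isSyzygyClosed_boundaryClass hP hd hHom G hG
  exact ⟨hGo, Q, p, hQ, hp, isDingProjective_of_isSyzygyClosed_of_isCosyzygyClosed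
    (isSyzygyClosed_boundaryClass hP hd hHom) (isCosyzygyClosed_boundaryClass hP hd hHom) _ hK hK⟩

theorem isCosyzygyClosed_isDingProjective :
    IsCosyzygyClosed fun G : ModuleCat.{u} R => IsDingProjective R G := by
  rintro G ⟨P, d, hP, hd, hHom, ⟨e⟩⟩
  have hG : boundaryClass d G := ⟨-1 + 1, ⟨e.trans (.ofEq _ _ (hd (-1)).linearMap_ker_eq)⟩⟩
  obtain ⟨hGo, Q, j, hQ, hj, hN⟩ := isCosyzygyClosed_boundaryClass hP hd hHom G hG
  exact ⟨hGo, Q, j, hQ, hj, isDingProjective_of_isSyzygyClosed_of_isCosyzygyClosed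
    (isSyzygyClosed_boundaryClass hP hd hHom) (isCosyzygyClosed_boundaryClass hP hd hHom) _ hN hN⟩

end DingClass

section SelfExtension

variable {R : Type u} [Ring R]

def SyzygyExtendsByDing (N : ModuleCat.{u} R) : Prop :=
  IsFlatOrthogonal R N ∧ ∃ (Q X : ModuleCat.{u} R) (p : (Q : Type u) →ₗ[R] N)
    (a : (X : Type u) →ₗ[R] LinearMap.ker p) (b : LinearMap.ker p →ₗ[R] N),
    Module.Projective R Q ∧ Function.Surjective p ∧ IsDingProjective R X ∧ IsShortExact a b

def CosyzygyExtendsByDing (N : ModuleCat.{u} R) : Prop :=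
  IsFlatOrthogonal R N ∧ ∃ (Q X : ModuleCat.{u} R) (j : (N : Type u) →ₗ[R] Q)
    (a : (N : Type u) →ₗ[R] (Q ⧸ LinearMap.range j)) (b : (Q ⧸ LinearMap.range j) →ₗ[R] X),
    Module.Projective R Q ∧ Function.Injective j ∧ IsDingProjective R X ∧ IsShortExact a b

theorem isSyzygyClosed_syzygyExtendsByDing : IsSyzygyClosed (SyzygyExtendsByDing (R := R)) := by
  rintro N ⟨hN, Q, X, p, a, b, hQ, hp, hX, hab⟩
  obtain ⟨hXo, QX, pX, hQX, hpX, hX'⟩ := isSyzygyClosed_isDingProjective X hX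
  obtain ⟨p', hp', j, r, hjr⟩ := hab.exists_horseshoe hpX hp
  exact ⟨hN, Q, p, hQ, hp, .of_shortExact hab hXo hN, .of R (QX × Q), .of R (LinearMap.ker pX),
    p', j, r, inferInstanceAs (Module.Projective R (QX × Q)), hp', hX', hjr⟩

theorem isCosyzygyClosed_cosyzygyExtendsByDing :
    IsCosyzygyClosed (CosyzygyExtendsByDing (R := R)) := by
  rintro N ⟨hN, Q, X, j, a, b, hQ, hj, hX, hab⟩
  obtain ⟨hXo, QX, jX, hQX, hjX, hX'⟩ := isCosyzygyClosed_isDingProjective X hX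
  obtain ⟨u, hu⟩ := hXo Q Module.Projective.isFlatModule _ _ a b hab j
  obtain ⟨j', hj', k, r, hkr⟩ := hab.exists_dual_horseshoe hj hjX u hu
  exact ⟨hN, Q, j, hQ, hj, .of_shortExact hab hN hXo, .of R (Q × QX),
    .of R (QX ⧸ LinearMap.range jX), j', k, r, inferInstanceAs (Module.Projective R (Q × QX)),
    hj', hX', hkr⟩

variable {G D : Type u} [AddCommGroup G] [Module R G] [AddCommGroup D] [Module R D]
  {a : G →ₗ[R] D} {b : D →ₗ[R] G}

theorem IsShortExact.syzygyExtendsByDing (hab : IsShortExact a b) (hD : IsDingProjective R D)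
    (hG : IsFlatOrthogonal R G) : SyzygyExtendsByDing (.of R G) := by
  obtain ⟨-, QD, pD, hQD, hpD, hK⟩ := isSyzygyClosed_isDingProjective (.of R D) hD
  obtain ⟨j, r, -, hjr⟩ := (IsShortExact.subtype_ker hpD).exists_ker_comp hab.injective hab.exact
  exact ⟨hG, QD, .of R (LinearMap.ker pD), b ∘ₗ pD, j, r, hQD, hab.surjective.comp hpD, hK, hjr⟩

theorem IsShortExact.cosyzygyExtendsByDing (hab : IsShortExact a b) (hD : IsDingProjective R D)
    (hG : IsFlatOrthogonal R G) : CosyzygyExtendsByDing (.of R G) := by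
  obtain ⟨-, QD, jD, hQD, hjD, hX⟩ := isCosyzygyClosed_isDingProjective (.of R D) hD
  obtain ⟨k, r, hkr⟩ := hab.exact.exists_coker_comp hab.surjective hjD
  exact ⟨hG, QD, _, jD ∘ₗ a, k, r, hQD, hjD.comp hab.injective, hX, hkr⟩

end SelfExtension

/-- Every strongly two-degree Ding projective left `R`-module is Ding
projective. -/
theorem strongly_twoDegree_ding_projective_is_ding_projective (R : Type u) [Ring R]
    (M : Type u) [AddCommGroup M] [Module R M]
    (hM : IsStronglyTwoDegreeDingProjective R M) :
    IsDingProjective R M := by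
  obtain ⟨D, f, hD, hff, hHom, ⟨e⟩⟩ := hM
  have hses : IsShortExact (LinearMap.range f).subtype f.rangeRestrict :=
    ⟨Submodule.injective_subtype _, LinearMap.exact_iff.mpr (by
      rw [LinearMap.ker_rangeRestrict, Submodule.range_subtype, hff.linearMap_ker_eq]),
      f.surjective_rangeRestrict⟩
  have hG : IsFlatOrthogonal R (LinearMap.range f) :=
    .of_shortExact_of_extend hses (isSyzygyClosed_isDingProjective D hD).1 fun F _ _ hF =>
      surjective_comp_range_subtype hff.linearMap_comp_eq_zero (hHom F hF)
  exact (isDingProjective_of_isSyzygyClosed_of_isCosyzygyClosed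
    isSyzygyClosed_syzygyExtendsByDing isCosyzygyClosed_cosyzygyExtendsByDing _
    (hses.syzygyExtendsByDing hD hG) (hses.cosyzygyExtendsByDing hD hG)).of_linearEquiv
    (e.trans (.ofEq _ _ hff.linearMap_ker_eq))
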